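/- Let F = {f_i(x) = r x + λ_i}_{i∈Γ} be a homogeneous affine IFS on ℝ satisfying the weak separation condition, let ν be a shift-invariant Borel probability measure on Γ^ℕ and set μ = πν, where π is the natural coding map to the attractor of F. Then there exists a constant C, depending only on F, such that H_{n+m}(μ) ≤ H_n(μ) + H_m(μ) + C for all n, m ∈ ℕ. -/

import Mathlib

open MeasureTheory Filter Set
open scoped ENNReal

noncomputable section

/-- `-(x * log₂ x)`, with the convention `0 · log₂ 0 = 0`. -/
def nlog2 (x : ℝ) : ℝ := -(x * Real.logb 2 x)

/-- The dyadic interval of generation `n` indexed by `k : ℤ`. -/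
def dyadicI (n : ℕ) (k : ℤ) : Set ℝ := Set.Ico ((k : ℝ) / 2 ^ n) (((k : ℝ) + 1) / 2 ^ n)

/-- `n`-scale entropy `H_n(μ)` of a measure on `ℝ` : the Shannon entropy (base 2) over the
partition of `ℝ` into dyadic intervals of length `2^{-n}`. -/
def scaleEnt (μ : Measure ℝ) (n : ℕ) : ℝ := ∑' k : ℤ, nlog2 (μ (dyadicI n k)).toReal

/-- The lower entropy dimension `dim μ = liminf_n H_n(μ)/n` of a measure on `ℝ`. -/
def entDim (μ : Measure ℝ) : ℝ := Filter.atTop.liminf fun n : ℕ => scaleEnt μ n / n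

/-- The left shift on `Γ^ℕ`. -/
def leftShift {Γ : Type*} (x : ℕ → Γ) : ℕ → Γ := fun n => x (n + 1)

/-- The natural coding map of the homogeneous affine IFS `{x ↦ r x + t i}_{i ∈ Γ}` on `ℝ`:
`π(i₀,i₁,…) = lim_k f_{i₀} ∘ ⋯ ∘ f_{i_k}(0) = ∑_k r^k t_{i_k}`. -/
def coding {Γ : Type*} (r : ℝ) (t : Γ → ℝ) (x : ℕ → Γ) : ℝ := ∑' k : ℕ, r ^ k * t (x k)

/-- The cylinder set `[i]` of infinite sequences beginning with the word `i`. -/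
def cylinder {Γ : Type*} {n : ℕ} (i : Fin n → Γ) : Set (ℕ → Γ) :=
  {x | ∀ k : Fin n, x (k : ℕ) = i k}

/-- The measure-theoretic entropy (base 2) of a shift-invariant measure on `Γ^ℕ`,
`h(ν,σ) = lim_n (1/n) ∑_{i ∈ Γ^n} −ν[i] log₂ ν[i]`. -/
def shiftEntropy {Γ : Type*} [Fintype Γ] [MeasurableSpace Γ] (ν : Measure (ℕ → Γ)) : ℝ :=
  Filter.atTop.liminf fun n : ℕ => (∑ i : Fin n → Γ, nlog2 (ν (cylinder i)).toReal) / n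

/-- `f_{i₀} ∘ ⋯ ∘ f_{i_{n-1}} (0)` for the homogeneous affine IFS `{x ↦ r x + t i}` and a
word `i ∈ Γ^n`. -/
def wordZero {Γ : Type*} (r : ℝ) (t : Γ → ℝ) {n : ℕ} (i : Fin n → Γ) : ℝ :=
  ∑ k : Fin n, r ^ (k : ℕ) * t (i k)

/-- The weak separation condition for the homogeneous affine IFS `{x ↦ r x + t i}_{i ∈ Γ}`:
there is `c > 0` such that for all `n ≥ 1` and words `i, j ∈ Γ^n`, either
`f_i(0) = f_j(0)` or `|f_i(0) − f_j(0)| > c rⁿ`. -/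
def WSC {Γ : Type*} (r : ℝ) (t : Γ → ℝ) : Prop :=
  ∃ c > (0 : ℝ), ∀ n : ℕ, 1 ≤ n → ∀ i j : Fin n → Γ,
    wordZero r t i = wordZero r t j ∨ c * r ^ n < |wordZero r t i - wordZero r t j|

section AuxLemmas
open Real

lemma negMulLog_add_le {x y : ℝ} (hx : 0 ≤ x) (hy : 0 ≤ y) :
    Real.negMulLog (x + y) ≤ Real.negMulLog x + Real.negMulLog y := by
  rcases eq_or_lt_of_le hx with h | hxpos
  · simp [← h]
  rcases eq_or_lt_of_le hy with h | hypos
  · simp [← h]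
  simp only [Real.negMulLog, neg_mul]
  have h1 : x * Real.log x ≤ x * Real.log (x + y) :=
    mul_le_mul_of_nonneg_left (Real.log_le_log hxpos (by linarith)) hx
  have h2 : y * Real.log y ≤ y * Real.log (x + y) :=
    mul_le_mul_of_nonneg_left (Real.log_le_log hypos (by linarith)) hy
  nlinarith [add_mul x y (Real.log (x+y))]

lemma negMulLog_sum_le {ι : Type*} (s : Finset ι) (x : ι → ℝ) (hx : ∀ i ∈ s, 0 ≤ x i) :
    Real.negMulLog (∑ i ∈ s, x i) ≤ ∑ i ∈ s, Real.negMulLog (x i) := by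
  classical
  induction s using Finset.cons_induction with
  | empty => simp
  | cons a s ha ih =>
    rw [Finset.sum_cons, Finset.sum_cons]
    have h1 : 0 ≤ x a := hx a (Finset.mem_cons_self a s)
    have h2 : ∀ i ∈ s, 0 ≤ x i := fun i hi => hx i (Finset.mem_cons_of_mem hi)
    have h3 : 0 ≤ ∑ i ∈ s, x i := Finset.sum_nonneg h2
    calc Real.negMulLog (x a + ∑ i ∈ s, x i)
        ≤ Real.negMulLog (x a) + Real.negMulLog (∑ i ∈ s, x i) := negMulLog_add_le h1 h3
      _ ≤ _ := by linarith [ih h2]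

/-- Jensen: entropy of a subprobability vector with `card` atoms. -/
lemma sum_negMulLog_le_card {ι : Type*} (s : Finset ι) (x : ι → ℝ) (hx : ∀ i ∈ s, 0 ≤ x i) :
    ∑ i ∈ s, Real.negMulLog (x i) ≤
      Real.negMulLog (∑ i ∈ s, x i) + (∑ i ∈ s, x i) * Real.log s.card := by
  classical
  rcases s.eq_empty_or_nonempty with rfl | hne
  · simp
  set T := ∑ i ∈ s, x i with hT
  have hT0 : 0 ≤ T := Finset.sum_nonneg hx
  have hcard : (0:ℝ) < s.card := by exact_mod_cast Finset.card_pos.2 hne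
  have hjen := Real.concaveOn_negMulLog.le_map_sum (t := s) (w := fun _ => (s.card : ℝ)⁻¹)
      (p := x) (fun i _ => by positivity)
      (by rw [Finset.sum_const, nsmul_eq_mul]; exact mul_inv_cancel₀ hcard.ne') (fun i hi => hx i hi)
  simp only [smul_eq_mul] at hjen
  have hsum : ∑ i ∈ s, (s.card : ℝ)⁻¹ * x i = T / s.card := by
    rw [← Finset.mul_sum]; ring
  rw [hsum] at hjen
  have hlhs : ∑ i ∈ s, (s.card : ℝ)⁻¹ * Real.negMulLog (x i)
      = (s.card : ℝ)⁻¹ * ∑ i ∈ s, Real.negMulLog (x i) := by rw [Finset.mul_sum]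
  rw [hlhs] at hjen
  have hval : Real.negMulLog (T / s.card)
      = (s.card:ℝ)⁻¹ * (Real.negMulLog T + T * Real.log s.card) := by
    rcases eq_or_lt_of_le hT0 with h | hTpos
    · simp [← h, Real.negMulLog]
    · rw [Real.negMulLog, Real.log_div (ne_of_gt hTpos) (ne_of_gt hcard), Real.negMulLog]
      field_simp
      ring
  rw [hval] at hjen
  have := mul_le_mul_of_nonneg_left hjen (le_of_lt hcard)
  calc ∑ i ∈ s, Real.negMulLog (x i)
      = (s.card:ℝ) * ((s.card:ℝ)⁻¹ * ∑ i ∈ s, Real.negMulLog (x i)) := by field_simp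
    _ ≤ (s.card:ℝ) * ((s.card:ℝ)⁻¹ * (Real.negMulLog T + T * Real.log s.card)) :=
        mul_le_mul_of_nonneg_left hjen (le_of_lt hcard)
    _ = Real.negMulLog T + T * Real.log s.card := by field_simp


/-- Joint entropy is at most the sum of the marginal entropies. -/
lemma sum_sum_negMulLog_le {ι κ : Type*} (s : Finset ι) (t : Finset κ) (p : ι → κ → ℝ)
    (hp : ∀ i ∈ s, ∀ j ∈ t, 0 ≤ p i j)
    (htot : ∑ i ∈ s, ∑ j ∈ t, p i j = 1) :
    ∑ i ∈ s, ∑ j ∈ t, Real.negMulLog (p i j) ≤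
      ∑ i ∈ s, Real.negMulLog (∑ j ∈ t, p i j) + ∑ j ∈ t, Real.negMulLog (∑ i ∈ s, p i j) := by
  classical
  set P : ι → ℝ := fun i => ∑ j ∈ t, p i j with hP
  set q : ι → κ → ℝ := fun i j => p i j / P i with hq
  have hP0 : ∀ i ∈ s, 0 ≤ P i := fun i hi => Finset.sum_nonneg (fun j hj => hp i hi j hj)
  have hq0 : ∀ i ∈ s, ∀ j ∈ t, 0 ≤ q i j := fun i hi j hj => div_nonneg (hp i hi j hj) (hP0 i hi)
  have hrowz : ∀ i ∈ s, P i = 0 → ∀ j ∈ t, p i j = 0 := by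
    intro i hi hPi j hj
    exact (Finset.sum_eq_zero_iff_of_nonneg (fun j hj => hp i hi j hj)).1 hPi j hj
  have hpq : ∀ i ∈ s, ∀ j ∈ t, p i j = P i * q i j := by
    intro i hi j hj
    by_cases hPi : P i = 0
    · simp [hq, hPi, hrowz i hi hPi j hj]
    · simp only [hq]; rw [mul_div_assoc', mul_comm, mul_div_assoc, div_self hPi, mul_one]
  have hPtot : ∑ i ∈ s, P i = 1 := htot
  have step1 : ∀ i ∈ s, ∑ j ∈ t, Real.negMulLog (p i j)
      = Real.negMulLog (P i) + P i * ∑ j ∈ t, Real.negMulLog (q i j) := by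
    intro i hi
    by_cases hPi : P i = 0
    · have h1 : ∀ j ∈ t, Real.negMulLog (p i j) = 0 := fun j hj => by
        simp [hrowz i hi hPi j hj]
      rw [Finset.sum_congr rfl h1, hPi]
      simp
    · have hq1 : ∑ j ∈ t, q i j = 1 := by
        simp only [hq, ← Finset.sum_div]
        exact div_self hPi
      have h2 : ∀ j ∈ t, Real.negMulLog (p i j)
          = q i j * Real.negMulLog (P i) + P i * Real.negMulLog (q i j) := by
        intro j hj
        rw [hpq i hi j hj, Real.negMulLog_mul]
      rw [Finset.sum_congr rfl h2, Finset.sum_add_distrib, ← Finset.sum_mul, hq1,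
        ← Finset.mul_sum, one_mul]
  have step2 : ∑ i ∈ s, P i * ∑ j ∈ t, Real.negMulLog (q i j)
      ≤ ∑ j ∈ t, Real.negMulLog (∑ i ∈ s, p i j) := by
    have hswap : ∑ i ∈ s, P i * ∑ j ∈ t, Real.negMulLog (q i j)
        = ∑ j ∈ t, ∑ i ∈ s, P i * Real.negMulLog (q i j) := by
      rw [Finset.sum_comm]
      exact Finset.sum_congr rfl fun i _ => Finset.mul_sum _ _ _
    rw [hswap]
    apply Finset.sum_le_sum
    intro j hj
    have hjen := Real.concaveOn_negMulLog.le_map_sum (t := s) (w := fun i => P i)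
        (p := fun i => q i j) (fun i hi => hP0 i hi) hPtot (fun i hi => hq0 i hi j hj)
    simp only [smul_eq_mul] at hjen
    have : ∑ i ∈ s, P i * q i j = ∑ i ∈ s, p i j :=
      Finset.sum_congr rfl fun i hi => (hpq i hi j hj).symm
    rw [this] at hjen
    exact hjen
  calc ∑ i ∈ s, ∑ j ∈ t, Real.negMulLog (p i j)
      = ∑ i ∈ s, (Real.negMulLog (P i) + P i * ∑ j ∈ t, Real.negMulLog (q i j)) :=
        Finset.sum_congr rfl step1
    _ = ∑ i ∈ s, Real.negMulLog (P i) + ∑ i ∈ s, P i * ∑ j ∈ t, Real.negMulLog (q i j) :=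
        Finset.sum_add_distrib
    _ ≤ _ := by linarith [step2]


lemma meas_inter_full {Ω : Type*} [MeasurableSpace Ω] (ν : Measure Ω) [IsProbabilityMeasure ν]
    {S : Set Ω} (hSm : MeasurableSet S) (hS : ν S = 1) (T : Set Ω) : ν T = ν (T ∩ S) := by
  have hSc : ν Sᶜ = 0 := by
    rw [MeasureTheory.prob_compl_eq_one_sub hSm, hS]
    simp
  refine le_antisymm ?_ (measure_mono Set.inter_subset_left)
  have hsub : T ⊆ T ∩ S ∪ Sᶜ := by
    intro x hx
    by_cases h : x ∈ S
    · exact Or.inl ⟨hx, h⟩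
    · exact Or.inr h
  calc ν T ≤ ν (T ∩ S ∪ Sᶜ) := measure_mono hsub
    _ ≤ ν (T ∩ S) + ν Sᶜ := measure_union_le _ _
    _ = ν (T ∩ S) := by rw [hSc, add_zero]

/-- Partition-comparison entropy lemma: if each atom of `P` meets at most `N` atoms of `Q`
in positive measure, then `H(Q) ≤ H(P) + log N`. -/
lemma cmp_lemma {Ω : Type*} [MeasurableSpace Ω] (ν : Measure Ω) [IsProbabilityMeasure ν]
    {ι κ : Type*} [DecidableEq ι] [DecidableEq κ] (s : Finset ι) (t : Finset κ)
    (P : ι → Set Ω) (Q : κ → Set Ω)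
    (hPm : ∀ i ∈ s, MeasurableSet (P i)) (hQm : ∀ j ∈ t, MeasurableSet (Q j))
    (hPd : (s : Set ι).PairwiseDisjoint P) (hQd : (t : Set κ).PairwiseDisjoint Q)
    (hPfull : ν (⋃ i ∈ s, P i) = 1) (hQfull : ν (⋃ j ∈ t, Q j) = 1)
    (N : ℕ) (hN : 1 ≤ N)
    (hcount : ∀ i ∈ s, (t.filter fun j => ν (P i ∩ Q j) ≠ 0).card ≤ N) :
    ∑ j ∈ t, Real.negMulLog (ν (Q j)).toReal ≤
      ∑ i ∈ s, Real.negMulLog (ν (P i)).toReal + Real.log N := by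
  classical
  set p : ι → κ → ℝ := fun i j => (ν (P i ∩ Q j)).toReal with hp
  have hp0 : ∀ i j, 0 ≤ p i j := fun i j => ENNReal.toReal_nonneg
  have hPune : MeasurableSet (⋃ i ∈ s, P i) := MeasurableSet.biUnion s.countable_toSet hPm
  have hQune : MeasurableSet (⋃ j ∈ t, Q j) := MeasurableSet.biUnion t.countable_toSet hQm
  have hfin : ∀ T : Set Ω, ν T ≠ ⊤ := fun T => measure_ne_top ν T
  have col : ∀ j ∈ t, (ν (Q j)).toReal = ∑ i ∈ s, p i j := by
    intro j hj
    have h1 : ν (Q j) = ν (Q j ∩ ⋃ i ∈ s, P i) := meas_inter_full ν hPune hPfull (Q j)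
    have h2 : Q j ∩ ⋃ i ∈ s, P i = ⋃ i ∈ s, (P i ∩ Q j) := by
      rw [Set.inter_iUnion₂]; simp [Set.inter_comm]
    have h3 : ν (⋃ i ∈ s, (P i ∩ Q j)) = ∑ i ∈ s, ν (P i ∩ Q j) :=
      measure_biUnion_finset (hPd.mono_on (fun i hi => Set.inter_subset_left) )
        (fun i hi => (hPm i hi).inter (hQm j hj))
    rw [h1, h2, h3, ENNReal.toReal_sum (fun i _ => hfin _)]
  have row : ∀ i ∈ s, (ν (P i)).toReal = ∑ j ∈ t, p i j := by
    intro i hi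
    have h1 : ν (P i) = ν (P i ∩ ⋃ j ∈ t, Q j) := meas_inter_full ν hQune hQfull (P i)
    have h2 : P i ∩ ⋃ j ∈ t, Q j = ⋃ j ∈ t, (P i ∩ Q j) := by rw [Set.inter_iUnion₂]
    have h3 : ν (⋃ j ∈ t, (P i ∩ Q j)) = ∑ j ∈ t, ν (P i ∩ Q j) :=
      measure_biUnion_finset (hQd.mono_on (fun j hj => Set.inter_subset_right))
        (fun j hj => (hPm i hi).inter (hQm j hj))
    rw [h1, h2, h3, ENNReal.toReal_sum (fun j _ => hfin _)]
  have tot : ∑ i ∈ s, (ν (P i)).toReal = 1 := by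
    have h3 : ν (⋃ i ∈ s, P i) = ∑ i ∈ s, ν (P i) := measure_biUnion_finset hPd hPm
    rw [← ENNReal.toReal_sum (fun i _ => hfin _), ← h3, hPfull, ENNReal.toReal_one]
  have hlogN : 0 ≤ Real.log N := Real.log_nonneg (by exact_mod_cast hN)
  have peri : ∀ i ∈ s, ∑ j ∈ t, Real.negMulLog (p i j) ≤
      Real.negMulLog ((ν (P i)).toReal) + (ν (P i)).toReal * Real.log N := by
    intro i hi
    set tf := t.filter fun j => ν (P i ∩ Q j) ≠ 0 with htf
    have hfe : ∑ j ∈ t, Real.negMulLog (p i j) = ∑ j ∈ tf, Real.negMulLog (p i j) := by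
      refine (Finset.sum_filter_of_ne ?_).symm
      intro j hj hne
      intro h0
      apply hne
      simp [hp, h0]
    have hfe2 : ∑ j ∈ t, p i j = ∑ j ∈ tf, p i j := by
      refine (Finset.sum_filter_of_ne ?_).symm
      intro j hj hne h0
      exact hne (by simp [hp, h0])
    have hjen := sum_negMulLog_le_card tf (p i) (fun j _ => hp0 i j)
    have hcard : Real.log tf.card ≤ Real.log N := by
      rcases Nat.eq_zero_or_pos tf.card with h | h
      · rw [h]; simpa using hlogN
      · exact Real.log_le_log (by exact_mod_cast h) (by exact_mod_cast hcount i hi)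
    have hsum0 : 0 ≤ ∑ j ∈ tf, p i j := Finset.sum_nonneg fun j _ => hp0 i j
    calc ∑ j ∈ t, Real.negMulLog (p i j) = ∑ j ∈ tf, Real.negMulLog (p i j) := hfe
      _ ≤ Real.negMulLog (∑ j ∈ tf, p i j) + (∑ j ∈ tf, p i j) * Real.log tf.card := hjen
      _ ≤ Real.negMulLog (∑ j ∈ tf, p i j) + (∑ j ∈ tf, p i j) * Real.log N := by
          exact add_le_add (le_refl _) (mul_le_mul_of_nonneg_left hcard hsum0)
      _ = Real.negMulLog ((ν (P i)).toReal) + (ν (P i)).toReal * Real.log N := by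
          rw [row i hi, hfe2]
  calc ∑ j ∈ t, Real.negMulLog (ν (Q j)).toReal
      = ∑ j ∈ t, Real.negMulLog (∑ i ∈ s, p i j) := by
        exact Finset.sum_congr rfl fun j hj => by rw [col j hj]
    _ ≤ ∑ j ∈ t, ∑ i ∈ s, Real.negMulLog (p i j) :=
        Finset.sum_le_sum fun j _ => negMulLog_sum_le s (fun i => p i j) (fun i _ => hp0 i _)
    _ = ∑ i ∈ s, ∑ j ∈ t, Real.negMulLog (p i j) := Finset.sum_comm
    _ ≤ ∑ i ∈ s, (Real.negMulLog ((ν (P i)).toReal) + (ν (P i)).toReal * Real.log N) :=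
        Finset.sum_le_sum peri
    _ = ∑ i ∈ s, Real.negMulLog ((ν (P i)).toReal) + (∑ i ∈ s, (ν (P i)).toReal) * Real.log N := by
        rw [Finset.sum_add_distrib, Finset.sum_mul]
    _ = _ := by rw [tot, one_mul]


lemma floor_ne_of_one_lt_abs {x y : ℝ} (h : 1 < |x - y|) : ⌊x⌋ ≠ ⌊y⌋ := by
  intro he
  have h1 : x - y = Int.fract x - Int.fract y := by
    have hx := Int.self_sub_floor x
    have hy := Int.self_sub_floor y
    rw [← hx, ← hy, he]
    ring
  have h2 : |Int.fract x - Int.fract y| < 1 := by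
    have hx1 := Int.fract_nonneg x
    have hx2 := Int.fract_lt_one x
    have hy1 := Int.fract_nonneg y
    have hy2 := Int.fract_lt_one y
    rw [abs_sub_lt_iff]
    constructor <;> linarith
  rw [h1] at h
  linarith

/-- Counting integers in a real window. -/
lemma card_int_window (u : Finset ℤ) (lo hi : ℝ)
    (h : ∀ j ∈ u, lo - 1 < (j : ℝ) ∧ (j : ℝ) ≤ hi) (N : ℕ) (hN : hi - lo + 2 ≤ N) :
    u.card ≤ N := by
  rcases u.eq_empty_or_nonempty with rfl | ⟨j0, hj0⟩
  · simp
  have hsub : u ⊆ Finset.Icc (⌈lo⌉ - 1) ⌊hi⌋ := by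
    intro j hj
    obtain ⟨h1, h2⟩ := h j hj
    rw [Finset.mem_Icc]
    constructor
    · have : lo ≤ (j : ℝ) + 1 := by linarith
      have := Int.ceil_le.2 (by exact_mod_cast this)
      omega
    · exact Int.le_floor.2 (by exact_mod_cast h2)
  have hcard := Finset.card_le_card hsub
  rw [Int.card_Icc] at hcard
  refine le_trans hcard ?_
  rw [Int.toNat_le]
  have h4 : (⌊hi⌋ : ℝ) ≤ hi := Int.floor_le hi
  have h5 : lo ≤ (⌈lo⌉ : ℝ) := Int.le_ceil lo
  have : ((⌊hi⌋ + 1 - (⌈lo⌉ - 1) : ℤ) : ℝ) ≤ (N : ℝ) := by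
    push_cast
    linarith
  exact_mod_cast this

/-- Counting separated points in a real window. -/
lemma card_sep_window (u : Finset ℝ) (d : ℝ) (hd : 0 < d)
    (hsep : ∀ a ∈ u, ∀ b ∈ u, a ≠ b → d < |a - b|)
    (lo hi : ℝ) (hin : ∀ a ∈ u, lo ≤ a ∧ a ≤ hi) (N : ℕ)
    (hN : (hi - lo) / d + 1 ≤ N) : u.card ≤ N := by
  rcases u.eq_empty_or_nonempty with rfl | ⟨a0, ha0⟩
  · simp
  set φ : ℝ → ℤ := fun a => ⌊(a - lo) / d⌋ with hφ
  have hmaps : ∀ a ∈ u, φ a ∈ Finset.Icc 0 ⌊(hi - lo) / d⌋ := by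
    intro a ha
    obtain ⟨h1, h2⟩ := hin a ha
    rw [Finset.mem_Icc]
    constructor
    · exact Int.floor_nonneg.2 (div_nonneg (by linarith) hd.le)
    · refine Int.floor_le_floor ?_
      gcongr
  have hinj : Set.InjOn φ u := by
    intro a ha b hb hab
    by_contra hne
    have h1 : d < |a - b| := hsep a ha b hb hne
    have h2 : 1 < |(a - lo) / d - (b - lo) / d| := by
      rw [div_sub_div_same, show a - lo - (b - lo) = a - b by ring, abs_div,
        abs_of_pos hd, lt_div_iff₀ hd]
      linarith
    exact floor_ne_of_one_lt_abs h2 hab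
  have hcard := Finset.card_le_card_of_injOn φ hmaps hinj
  rw [Int.card_Icc] at hcard
  have hz : (0:ℝ) ≤ (hi - lo) / d := by
    obtain ⟨h1, h2⟩ := hin a0 ha0
    exact div_nonneg (by linarith) hd.le
  have hz2 : (0:ℤ) ≤ ⌊(hi - lo) / d⌋ := Int.floor_nonneg.2 hz
  refine le_trans hcard ?_
  rw [Int.toNat_le]
  have h4 := Int.floor_le ((hi - lo) / d)
  have : ((⌊(hi - lo) / d⌋ + 1 - 0 : ℤ) : ℝ) ≤ (N : ℝ) := by
    push_cast
    linarith
  exact_mod_cast this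

section CodingFacts
variable {Γ : Type*} {r : ℝ} (hr0 : 0 < r) (hr1 : r < 1) (lam : Γ → ℝ)

lemma nlog2_eq (x : ℝ) : nlog2 x = Real.negMulLog x / Real.log 2 := by
  rw [nlog2, Real.negMulLog, Real.logb]
  ring

lemma leftShift_iterate (k : ℕ) (x : ℕ → Γ) (i : ℕ) : (leftShift^[k] x) i = x (i + k) := by
  induction k generalizing x i with
  | zero => rfl
  | succ k ih =>
    rw [Function.iterate_succ_apply, ih (leftShift x) i]
    simp [leftShift, Nat.add_assoc]

include hr0 hr1 in
lemma summable_coding {L : ℝ} (hL : ∀ i, |lam i| ≤ L) (x : ℕ → Γ) :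
    Summable fun k : ℕ => r ^ k * lam (x k) := by
  apply Summable.of_norm
  apply Summable.of_nonneg_of_le (fun k => norm_nonneg _)
    (fun k => ?_) ((summable_geometric_of_lt_one hr0.le hr1).mul_right L)
  rw [norm_mul, Real.norm_eq_abs, Real.norm_eq_abs, abs_pow, abs_of_pos hr0]
  exact mul_le_mul_of_nonneg_left (hL (x k)) (by positivity)

include hr0 hr1 in
lemma coding_abs_le {L : ℝ} (hL : ∀ i, |lam i| ≤ L) (x : ℕ → Γ) :
    |coding r lam x| ≤ L * (1 - r)⁻¹ := by
  have h1 : Summable fun k : ℕ => r ^ k * lam (x k) := summable_coding hr0 hr1 lam hL x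
  calc |coding r lam x| ≤ ∑' k : ℕ, ‖r ^ k * lam (x k)‖ := norm_tsum_le_tsum_norm h1.norm
    _ ≤ ∑' k : ℕ, r ^ k * L := by
      apply Summable.tsum_le_tsum ?_ h1.norm ((summable_geometric_of_lt_one hr0.le hr1).mul_right L)
      intro k
      rw [norm_mul, Real.norm_eq_abs, Real.norm_eq_abs, abs_pow, abs_of_pos hr0]
      exact mul_le_mul_of_nonneg_left (hL (x k)) (by positivity)
    _ = L * (1 - r)⁻¹ := by rw [tsum_mul_right, tsum_geometric_of_lt_one hr0.le hr1]; ring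

include hr0 hr1 in
lemma coding_split {L : ℝ} (hL : ∀ i, |lam i| ≤ L) (x : ℕ → Γ) (k : ℕ) :
    coding r lam x = wordZero r lam (fun i : Fin k => x i) + r ^ k * coding r lam (leftShift^[k] x) := by
  have h1 : Summable fun j : ℕ => r ^ j * lam (x j) := summable_coding hr0 hr1 lam hL x
  have h2 := Summable.sum_add_tsum_nat_add (f := fun j : ℕ => r ^ j * lam (x j)) k h1
  rw [coding, ← h2]
  congr 1
  · rw [wordZero, Fin.sum_univ_eq_sum_range (fun i => r ^ i * lam (x i)) k]
  · rw [coding, ← tsum_mul_left]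
    congr 1
    ext j
    simp only [leftShift_iterate k x j, pow_add]
    ring

lemma wordZero_append {k l : ℕ} (i : Fin k → Γ) (j : Fin l → Γ) :
    wordZero r lam (Fin.append i j) = wordZero r lam i + r ^ k * wordZero r lam j := by
  rw [wordZero, Fin.sum_univ_add]
  congr 1
  · refine Finset.sum_congr rfl fun x _ => ?_
    rw [Fin.append_left]
    simp
  · rw [wordZero, Finset.mul_sum]
    refine Finset.sum_congr rfl fun x _ => ?_
    rw [Fin.append_right]
    simp [pow_add]
    ring

lemma mem_dyadicI (n : ℕ) (y : ℝ) : y ∈ dyadicI n ⌊y * 2 ^ n⌋ := by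
  have h2 : (0:ℝ) < 2 ^ n := by positivity
  constructor
  · rw [div_le_iff₀ h2]
    exact Int.floor_le _
  · rw [lt_div_iff₀ h2]
    exact_mod_cast Int.lt_floor_add_one (y * 2 ^ n)

lemma dyadicI_mem_unique {n : ℕ} {j : ℤ} {y : ℝ} (h : y ∈ dyadicI n j) : j = ⌊y * 2 ^ n⌋ := by
  have h2 : (0:ℝ) < 2 ^ n := by positivity
  obtain ⟨h3, h4⟩ := h
  rw [div_le_iff₀ h2] at h3
  rw [lt_div_iff₀ h2] at h4
  symm
  apply Int.floor_eq_iff.2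
  constructor
  · exact h3
  · exact_mod_cast h4

lemma dyadicI_disjoint {n : ℕ} {j j' : ℤ} (h : j ≠ j') : Disjoint (dyadicI n j) (dyadicI n j') := by
  rw [Set.disjoint_left]
  intro y h1 h2
  exact h ((dyadicI_mem_unique h1).trans (dyadicI_mem_unique h2).symm)

lemma measurable_leftShift [MeasurableSpace Γ] : Measurable (leftShift (Γ := Γ)) :=
  measurable_pi_lambda _ fun n => measurable_pi_apply (n + 1)

end CodingFacts



end AuxLemmas

set_option maxHeartbeats 1000000 in
/-- almost-subadditivity of the dyadic entropies of `μ = πν` under the weak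
separation condition; the constant `C` depends only on the IFS (Lemma 3.3 of the paper). -/
theorem stmt6 {Γ : Type*} [Fintype Γ] [MeasurableSpace Γ]
    (r : ℝ) (hr0 : 0 < r) (hr1 : r < 1) (lam : Γ → ℝ)
    (hwsc : WSC r lam) :
    ∃ C : ℝ, ∀ ν : Measure (ℕ → Γ), IsProbabilityMeasure ν → ν.map leftShift = ν →
      ∀ n m : ℕ,
        scaleEnt (ν.map (coding r lam)) (n + m) ≤
          scaleEnt (ν.map (coding r lam)) n + scaleEnt (ν.map (coding r lam)) m + C := by
  classical
  rcases isEmpty_or_nonempty Γ with hem | hne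
  · refine ⟨0, fun ν hprob hinv n m => absurd hprob.measure_univ ?_⟩
    have hE : IsEmpty (ℕ → Γ) := ⟨fun f => hem.false (f 0)⟩
    rw [Set.univ_eq_empty_iff.2 hE, measure_empty]
    exact zero_ne_one
  obtain ⟨c, hc0, hsep⟩ := hwsc
  set L : ℝ := Finset.univ.sup' Finset.univ_nonempty (fun i : Γ => |lam i|) with hLdef
  have hL : ∀ i : Γ, |lam i| ≤ L := fun i => Finset.le_sup' (fun i : Γ => |lam i|) (Finset.mem_univ i)
  have hL0 : 0 ≤ L := le_trans (abs_nonneg _) (hL (Classical.arbitrary Γ))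
  set M : ℝ := L * (1 - r)⁻¹ with hMdef
  have hM0 : 0 ≤ M := mul_nonneg hL0 (by rw [inv_nonneg]; linarith)
  set N : ℕ := ⌈2 * M⌉₊ + ⌈(1 / r + 2 * M) / c⌉₊ + 2 with hNdef
  have hN1 : 1 ≤ N := by omega
  have hNa : 2 * M + 2 ≤ (N : ℝ) := by
    have := Nat.le_ceil (2 * M)
    have h2 : (0:ℝ) ≤ ⌈(1 / r + 2 * M) / c⌉₊ := Nat.cast_nonneg _
    rw [hNdef]; push_cast
    linarith
  have hNb : (1 / r + 2 * M) / c + 1 ≤ (N : ℝ) := by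
    have := Nat.le_ceil ((1 / r + 2 * M) / c)
    have h2 : (0:ℝ) ≤ ⌈2 * M⌉₊ := Nat.cast_nonneg _
    rw [hNdef]; push_cast
    linarith
  have hlog2 : (0:ℝ) < Real.log 2 := Real.log_pos one_lt_two
  have hlogN : 0 ≤ Real.log N := Real.log_nonneg (by exact_mod_cast hN1)
  refine ⟨3 * Real.logb 2 N, ?_⟩
  intro ν hprob hinv n m
  by_cases hmeas : AEMeasurable (coding r lam) ν
  swap
  · rw [Measure.map_of_not_aemeasurable hmeas]
    have hz : ∀ k : ℕ, scaleEnt 0 k = 0 := by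
      intro k
      simp [scaleEnt, nlog2]
    rw [hz, hz, hz]
    have : 0 ≤ Real.logb 2 N := by
      rw [Real.logb]
      positivity
    linarith
  -- main case
  set g : (ℕ → Γ) → ℝ := hmeas.mk _ with hgdef
  have hg : Measurable g := hmeas.measurable_mk
  have hae : coding r lam =ᵐ[ν] g := hmeas.ae_eq_mk
  have hμ : ν.map (coding r lam) = ν.map g := Measure.map_congr hae
  set Z : Set (ℕ → Γ) := toMeasurable ν {x | ¬ coding r lam x = g x} with hZdef
  have hZm : MeasurableSet Z := measurableSet_toMeasurable _ _
  have hZ0 : ν Z = 0 := by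
    rw [hZdef, measure_toMeasurable]
    exact ae_iff.1 hae
  have hZsub : ∀ x, x ∉ Z → coding r lam x = g x := by
    intro x hx
    by_contra hne
    exact hx (subset_toMeasurable _ _ hne)
  have hσk : ∀ k : ℕ, Measurable (leftShift^[k] : (ℕ → Γ) → (ℕ → Γ)) :=
    fun k => (measurable_leftShift (Γ := Γ)).iterate k
  have hinvk : ∀ k : ℕ, ν.map (leftShift^[k]) = ν := by
    intro k
    induction k with
    | zero => simp [Measure.map_id]
    | succ k ih =>
      rw [Function.iterate_succ, ← Measure.map_map (hσk k) (measurable_leftShift (Γ := Γ)),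
        hinv, ih]
  have hZk : ∀ k : ℕ, ν (leftShift^[k] ⁻¹' Z) = 0 := by
    intro k
    rw [← Measure.map_apply (hσk k) hZm, hinvk k, hZ0]
  set F : ℕ → (ℕ → Γ) → ℝ := fun k x => g x - r ^ k * g (leftShift^[k] x) with hFdef
  have hFm : ∀ k, Measurable (F k) :=
    fun k => hg.sub (measurable_const.mul (hg.comp (hσk k)))
  set A : (k : ℕ) → Finset ℝ :=
    fun k => Finset.image (fun i : Fin k → Γ => wordZero r lam i) Finset.univ with hAdef
  set Patm : ℕ → ℝ → Set (ℕ → Γ) := fun k a => F k ⁻¹' {a} with hPatmdef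
  have hPatmm : ∀ k a, MeasurableSet (Patm k a) := fun k a => hFm k (measurableSet_singleton a)
  set E : ℕ → ℝ := fun k => ∑ a ∈ A k, Real.negMulLog (ν (Patm k a)).toReal with hEdef
  set G : ℕ → Set (ℕ → Γ) := fun k => Z ∪ leftShift^[k] ⁻¹' Z with hGdef
  have hG0 : ∀ k, ν (G k) = 0 := fun k => measure_union_null hZ0 (hZk k)
  have hFS : ∀ k x, x ∉ G k → F k x = wordZero r lam (fun i : Fin k => x (i : ℕ)) := by
    intro k x hx
    simp only [hGdef, Set.mem_union] at hx
    push_neg at hx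
    have h1 := hZsub x hx.1
    have h2 := hZsub _ hx.2
    have h3 := coding_split hr0 hr1 lam hL x k
    rw [h1, h2] at h3
    simp only [hFdef]
    linarith
  have hgb : ∀ x, x ∉ Z → |g x| ≤ M := by
    intro x hx
    rw [← hZsub x hx]
    exact coding_abs_le hr0 hr1 lam hL x
  have hgdist : ∀ k a x, x ∈ Patm k a → x ∉ G k → |g x - a| ≤ M * r ^ k := by
    intro k a x hxP hxG
    simp only [hGdef, Set.mem_union] at hxG
    push_neg at hxG
    have hb := hgb _ hxG.2
    have hFa : F k x = a := hxP
    simp only [hFdef] at hFa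
    have hdiff : g x - a = r ^ k * g (leftShift^[k] x) := by linarith
    rw [hdiff, abs_mul, abs_pow, abs_of_pos hr0]
    calc r ^ k * |g (leftShift^[k] x)| ≤ r ^ k * M :=
          mul_le_mul_of_nonneg_left hb (by positivity)
      _ = M * r ^ k := mul_comm _ _
  have hPd : ∀ k, ((A k : Set ℝ)).PairwiseDisjoint (Patm k) := by
    intro k a _ b _ hab
    exact Disjoint.preimage _ (by simp [hab])
  have hPfull : ∀ k, ν (⋃ a ∈ A k, Patm k a) = 1 := by
    intro k
    have hm : MeasurableSet (⋃ a ∈ A k, Patm k a) :=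
      MeasurableSet.biUnion (A k).countable_toSet (fun a _ => hPatmm k a)
    rw [← prob_compl_eq_zero_iff hm]
    apply measure_mono_null ?_ (hG0 k)
    intro x hx
    by_contra hxG
    apply hx
    refine Set.mem_iUnion₂.2 ⟨F k x, ?_, rfl⟩
    rw [hFS k x hxG]
    exact Finset.mem_image.2 ⟨_, Finset.mem_univ _, rfl⟩
  set Q : ℕ → ℤ → Set (ℕ → Γ) := fun n j => g ⁻¹' dyadicI n j with hQdef
  have hQm : ∀ n j, MeasurableSet (Q n j) := fun n j => hg measurableSet_Ico
  have hQd : ∀ n' : ℕ, (↑(Finset.Icc (-⌈M * 2 ^ n'⌉ - 1) ⌈M * 2 ^ n'⌉) : Set ℤ).PairwiseDisjoint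
      (Q n') := by
    intro n' a _ b _ hab
    exact Disjoint.preimage _ (dyadicI_disjoint hab)
  set J : ℕ → Finset ℤ := fun n' => Finset.Icc (-⌈M * 2 ^ n'⌉ - 1) ⌈M * 2 ^ n'⌉ with hJdef
  have hmemJ : ∀ (n' : ℕ) (x : ℕ → Γ), x ∉ Z → ∀ j : ℤ, g x ∈ dyadicI n' j → j ∈ J n' := by
    intro n' x hx j hj
    have hb := hgb x hx
    rw [abs_le] at hb
    have h2 : (0:ℝ) < 2 ^ n' := by positivity
    obtain ⟨hj1, hj2⟩ := hj
    rw [div_le_iff₀ h2] at hj1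
    rw [lt_div_iff₀ h2] at hj2
    have hce := Int.le_ceil (M * 2 ^ n')
    rw [Finset.mem_Icc]
    constructor
    · have h5 : ((-⌈M * 2 ^ n'⌉ - 1 : ℤ) : ℝ) < (j : ℝ) := by
        push_cast
        nlinarith
      have h6 : (-⌈M * 2 ^ n'⌉ - 1 : ℤ) < j := by exact_mod_cast h5
      omega
    · have : (j : ℝ) ≤ ((⌈M * 2 ^ n'⌉ : ℤ) : ℝ) := by
        nlinarith
      exact_mod_cast this
  have hQfull : ∀ n', ν (⋃ j ∈ J n', Q n' j) = 1 := by
    intro n'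
    have hm : MeasurableSet (⋃ j ∈ J n', Q n' j) :=
      MeasurableSet.biUnion (J n').countable_toSet (fun j _ => hQm n' j)
    rw [← prob_compl_eq_zero_iff hm]
    apply measure_mono_null ?_ hZ0
    intro x hx
    by_contra hxZ
    apply hx
    have hmem := mem_dyadicI n' (g x)
    exact Set.mem_iUnion₂.2 ⟨⌊g x * 2 ^ n'⌋, hmemJ n' x hxZ _ hmem, hmem⟩
  set D : ℕ → ℝ := fun n' => ∑ j ∈ J n', Real.negMulLog (ν (Q n' j)).toReal with hDdef
  have hscale : ∀ n', scaleEnt (ν.map (coding r lam)) n' = D n' / Real.log 2 := by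
    intro n'
    rw [hμ, scaleEnt]
    have hQeq : ∀ j : ℤ, (ν.map g) (dyadicI n' j) = ν (Q n' j) := fun j =>
      Measure.map_apply hg measurableSet_Ico
    have hzero : ∀ j ∉ J n', nlog2 ((ν.map g) (dyadicI n' j)).toReal = 0 := by
      intro j hj
      have hsub : Q n' j ⊆ Z := by
        intro x hxQ
        by_contra hxZ
        exact hj (hmemJ n' x hxZ j hxQ)
      rw [hQeq j, measure_mono_null hsub hZ0]
      simp [nlog2]
    rw [tsum_eq_sum hzero]
    simp only [hQeq, nlog2_eq]
    rw [← Finset.sum_div]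
  -- choice of generations
  have hex : ∀ n' : ℕ, ∃ k : ℕ, r ^ k ≤ ((2:ℝ) ^ n')⁻¹ := by
    intro n'
    obtain ⟨k, hk⟩ := exists_pow_lt_of_lt_one (by positivity : (0:ℝ) < ((2:ℝ) ^ n')⁻¹) hr1
    exact ⟨k, hk.le⟩
  have hexmin : ∀ n' : ℕ, ∃ k : ℕ, r ^ k ≤ ((2:ℝ) ^ n')⁻¹ ∧
      ∀ k' < k, ¬ r ^ k' ≤ ((2:ℝ) ^ n')⁻¹ :=
    fun n' => ⟨Nat.find (hex n'), Nat.find_spec (hex n'),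
      fun k' hk' => Nat.find_min (hex n') hk'⟩
  choose kk hkk hkkmin using hexmin
  -- nonzero measure intersections contain good points
  have hwitness : ∀ (S T : Set (ℕ → Γ)) (k : ℕ), ν (S ∩ T) ≠ 0 → ∃ x, x ∈ S ∧ x ∈ T ∧ x ∉ G k := by
    intro S T k hST
    by_contra hcon
    push_neg at hcon
    apply hST
    apply measure_mono_null ?_ (hG0 k)
    intro x ⟨hxS, hxT⟩
    by_contra hxG
    exact hxG (hcon x hxS hxT)
  -- Step 1
  have step1 : D (n + m) ≤ E (kk n + kk m) + Real.log N := by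
    have hrK : r ^ (kk n + kk m) * 2 ^ (n + m) ≤ 1 := by
      have h1 := hkk n
      have h2 := hkk m
      have h2n : (0:ℝ) < 2 ^ n := by positivity
      have h2m : (0:ℝ) < 2 ^ m := by positivity
      have h3 : r ^ (kk n) * r ^ (kk m) ≤ ((2:ℝ) ^ n)⁻¹ * ((2:ℝ) ^ m)⁻¹ :=
        mul_le_mul h1 h2 (by positivity) (by positivity)
      calc r ^ (kk n + kk m) * 2 ^ (n + m)
          = (r ^ kk n * r ^ kk m) * (2 ^ n * 2 ^ m) := by rw [pow_add, pow_add]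
        _ ≤ ((2:ℝ) ^ n)⁻¹ * ((2:ℝ) ^ m)⁻¹ * (2 ^ n * 2 ^ m) := by
            apply mul_le_mul_of_nonneg_right h3 (by positivity)
        _ = 1 := by field_simp
    simp only [hDdef, hEdef]
    apply cmp_lemma ν (A (kk n + kk m)) (J (n + m)) (Patm (kk n + kk m)) (Q (n + m))
      (fun a _ => hPatmm _ a) (fun j _ => hQm _ j) (hPd _) (hQd _) (hPfull _) (hQfull _) N hN1
    intro a ha
    apply card_int_window _ ((a - M * r ^ (kk n + kk m)) * 2 ^ (n + m))
      ((a + M * r ^ (kk n + kk m)) * 2 ^ (n + m)) ?_ N ?_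
    · intro j hj
      rw [Finset.mem_filter] at hj
      obtain ⟨x, hxP, hxQ, hxG⟩ := hwitness _ _ (kk n + kk m) hj.2
      have hd := hgdist _ a x hxP hxG
      rw [abs_le] at hd
      simp only [hQdef, dyadicI, Set.mem_preimage, Set.mem_Ico] at hxQ
      obtain ⟨h1, h2⟩ := hxQ
      have h2nm : (0:ℝ) < 2 ^ (n + m) := by positivity
      rw [div_le_iff₀ h2nm] at h1
      rw [lt_div_iff₀ h2nm] at h2
      constructor
      · nlinarith [hd.1]
      · nlinarith [hd.2]
    · have heq : (a + M * r ^ (kk n + kk m)) * 2 ^ (n + m)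
          - (a - M * r ^ (kk n + kk m)) * 2 ^ (n + m)
          = 2 * M * (r ^ (kk n + kk m) * 2 ^ (n + m)) := by ring
      rw [heq]
      nlinarith [hrK, hM0]
  -- Step 2 (subadditivity)
  have step2 : E (kk n + kk m) ≤ E (kk n) + E (kk m) := by
    set k := kk n with hk
    set l := kk m with hl
    set R : ℝ → ℝ → Set (ℕ → Γ) := fun a b => Patm k a ∩ leftShift^[k] ⁻¹' (Patm l b) with hRdef
    have hRm : ∀ a b, MeasurableSet (R a b) :=
      fun a b => (hPatmm k a).inter ((hσk k) (hPatmm l b))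
    have hFadd : ∀ x, F (k + l) x = F k x + r ^ k * F l (leftShift^[k] x) := by
      intro x
      simp only [hFdef]
      have hcomp : leftShift^[l] (leftShift^[k] x) = leftShift^[k + l] x := by
        rw [← Function.iterate_add_apply]
        congr 1
        omega
      rw [hcomp, pow_add]
      ring
    set W : Set (ℕ → Γ) := ⋃ a ∈ A k, Patm k a with hWdef
    set W' : Set (ℕ → Γ) := leftShift^[k] ⁻¹' (⋃ b ∈ A l, Patm l b) with hW'def
    have hWm : MeasurableSet W :=
      MeasurableSet.biUnion (A k).countable_toSet (fun a _ => hPatmm k a)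
    have hUlm : MeasurableSet (⋃ b ∈ A l, Patm l b) :=
      MeasurableSet.biUnion (A l).countable_toSet (fun b _ => hPatmm l b)
    have hW'm : MeasurableSet W' := (hσk k) hUlm
    have hW1 : ν W = 1 := hPfull k
    have hW'1 : ν W' = 1 := by
      rw [hW'def, ← Measure.map_apply (hσk k) hUlm, hinvk k]
      exact hPfull l
    have hWW'm : MeasurableSet (W ∩ W') := hWm.inter hW'm
    have hWW'1 : ν (W ∩ W') = 1 := by
      rw [← meas_inter_full ν hW'm hW'1 W]
      exact hW1
    have hsplit : ∀ v : ℝ, Patm (k + l) v ∩ (W ∩ W') =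
        ⋃ p ∈ (A k ×ˢ A l).filter (fun p : ℝ × ℝ => p.1 + r ^ k * p.2 = v), R p.1 p.2 := by
      intro v
      ext x
      constructor
      · rintro ⟨hxv, hxW, hxW'⟩
        obtain ⟨a, ha, hxa⟩ := Set.mem_iUnion₂.1 hxW
        rw [hW'def, Set.mem_preimage] at hxW'
        obtain ⟨b, hb, hxb⟩ := Set.mem_iUnion₂.1 hxW'
        have hva : F k x = a := hxa
        have hvb : F l (leftShift^[k] x) = b := hxb
        have hxv' : F (k + l) x = v := hxv
        have hv : a + r ^ k * b = v := by
          have h5 := hFadd x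
          rw [hva, hvb] at h5
          linarith
        refine Set.mem_iUnion₂.2 ⟨(a, b), ?_, ⟨hxa, hxb⟩⟩
        rw [Finset.mem_filter]
        exact ⟨Finset.mem_product.2 ⟨ha, hb⟩, hv⟩
      · intro hx
        obtain ⟨p, hp, hxp⟩ := Set.mem_iUnion₂.1 hx
        rw [Finset.mem_filter] at hp
        obtain ⟨hpmem, hpv⟩ := hp
        obtain ⟨hx1, hx2⟩ := hxp
        have hva : F k x = p.1 := hx1
        have hvb : F l (leftShift^[k] x) = p.2 := hx2
        refine ⟨?_, ?_, ?_⟩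
        · show F (k + l) x ∈ ({v} : Set ℝ)
          rw [Set.mem_singleton_iff, hFadd x, hva, hvb]
          exact hpv
        · exact Set.mem_iUnion₂.2 ⟨p.1, (Finset.mem_product.1 hpmem).1, hx1⟩
        · rw [hW'def, Set.mem_preimage]
          exact Set.mem_iUnion₂.2 ⟨p.2, (Finset.mem_product.1 hpmem).2, hx2⟩
    have hRd : ∀ (u : Finset (ℝ × ℝ)), (↑u : Set (ℝ × ℝ)).PairwiseDisjoint
        (fun p : ℝ × ℝ => R p.1 p.2) := by
      intro u p _ q _ hpq
      have hne : p.1 ≠ q.1 ∨ p.2 ≠ q.2 := by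
        by_contra hcon
        push_neg at hcon
        exact hpq (Prod.ext hcon.1 hcon.2)
      rcases hne with h | h
      · exact Set.disjoint_of_subset Set.inter_subset_left Set.inter_subset_left
          (Disjoint.preimage _ (by simp [h]))
      · exact Set.disjoint_of_subset Set.inter_subset_right Set.inter_subset_right
          (Disjoint.preimage _ (Disjoint.preimage _ (by simp [h])))
    have hmeasv : ∀ v, (ν (Patm (k + l) v)).toReal =
        ∑ p ∈ (A k ×ˢ A l).filter (fun p : ℝ × ℝ => p.1 + r ^ k * p.2 = v),
          (ν (R p.1 p.2)).toReal := by
      intro v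
      rw [meas_inter_full ν hWW'm hWW'1 (Patm (k + l) v), hsplit v,
        measure_biUnion_finset ((hRd _).mono_on (fun p _ => le_refl _)) (fun p _ => hRm p.1 p.2),
        ENNReal.toReal_sum (fun p _ => measure_ne_top ν _)]
    have hrow : ∀ a, ∑ b ∈ A l, (ν (R a b)).toReal = (ν (Patm k a)).toReal := by
      intro a
      have h1 : Patm k a ∩ W' = ⋃ b ∈ A l, R a b := by
        rw [hW'def]
        ext x
        constructor
        · rintro ⟨hx1, hx2⟩
          rw [Set.mem_preimage] at hx2
          obtain ⟨b, hb, hxb⟩ := Set.mem_iUnion₂.1 hx2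
          exact Set.mem_iUnion₂.2 ⟨b, hb, hx1, hxb⟩
        · intro hx
          obtain ⟨b, hb, hx1, hx2⟩ := Set.mem_iUnion₂.1 hx
          exact ⟨hx1, Set.mem_preimage.2 (Set.mem_iUnion₂.2 ⟨b, hb, hx2⟩)⟩
      have hdisj : (↑(A l) : Set ℝ).PairwiseDisjoint (fun b => R a b) := by
        intro b _ b' _ hbb'
        exact Set.disjoint_of_subset Set.inter_subset_right Set.inter_subset_right
          (Disjoint.preimage _ (Disjoint.preimage _ (by simp [hbb'])))
      rw [← ENNReal.toReal_sum (fun b _ => measure_ne_top ν _),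
        ← measure_biUnion_finset hdisj (fun b _ => hRm a b), ← h1,
        ← meas_inter_full ν hW'm hW'1]
    have hcol : ∀ b, ∑ a ∈ A k, (ν (R a b)).toReal = (ν (Patm l b)).toReal := by
      intro b
      have h1 : (leftShift^[k] ⁻¹' (Patm l b)) ∩ W = ⋃ a ∈ A k, R a b := by
        rw [hWdef]
        ext x
        constructor
        · rintro ⟨hx1, hx2⟩
          obtain ⟨a, ha, hxa⟩ := Set.mem_iUnion₂.1 hx2
          exact Set.mem_iUnion₂.2 ⟨a, ha, hxa, hx1⟩
        · intro hx
          obtain ⟨a, ha, hx1, hx2⟩ := Set.mem_iUnion₂.1 hx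
          exact ⟨hx2, Set.mem_iUnion₂.2 ⟨a, ha, hx1⟩⟩
      have hdisj : (↑(A k) : Set ℝ).PairwiseDisjoint (fun a => R a b) := by
        intro a _ a' _ haa'
        exact Set.disjoint_of_subset Set.inter_subset_left Set.inter_subset_left
          (Disjoint.preimage _ (by simp [haa']))
      have h2 : ν (leftShift^[k] ⁻¹' (Patm l b)) = ν (Patm l b) := by
        rw [← Measure.map_apply (hσk k) (hPatmm l b), hinvk k]
      rw [← ENNReal.toReal_sum (fun a _ => measure_ne_top ν _),
        ← measure_biUnion_finset hdisj (fun a _ => hRm a b), ← h1,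
        ← meas_inter_full ν hWm hW1, h2]
    have htot : ∑ a ∈ A k, (ν (Patm k a)).toReal = 1 := by
      have h3 : ν (⋃ a ∈ A k, Patm k a) = ∑ a ∈ A k, ν (Patm k a) :=
        measure_biUnion_finset (hPd k) (fun a _ => hPatmm k a)
      rw [← ENNReal.toReal_sum (fun a _ => measure_ne_top ν _), ← h3, hPfull k,
        ENNReal.toReal_one]
    have hmapsto : ∀ p ∈ A k ×ˢ A l, p.1 + r ^ k * p.2 ∈ A (k + l) := by
      intro p hp
      obtain ⟨hp1, hp2⟩ := Finset.mem_product.1 hp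
      simp only [hAdef, Finset.mem_image, Finset.mem_univ, true_and] at hp1 hp2 ⊢
      obtain ⟨i, hi⟩ := hp1
      obtain ⟨j, hj⟩ := hp2
      exact ⟨Fin.append i j, by rw [wordZero_append, hi, hj]⟩
    have htotal : ∑ a ∈ A k, ∑ b ∈ A l, (ν (R a b)).toReal = 1 := by
      rw [Finset.sum_congr rfl (fun a _ => hrow a)]
      exact htot
    calc E (k + l) = ∑ v ∈ A (k + l), Real.negMulLog (ν (Patm (k + l) v)).toReal := by
          simp only [hEdef]
      _ ≤ ∑ v ∈ A (k + l), ∑ p ∈ (A k ×ˢ A l).filter (fun p : ℝ × ℝ => p.1 + r ^ k * p.2 = v),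
            Real.negMulLog (ν (R p.1 p.2)).toReal := by
          apply Finset.sum_le_sum
          intro v _
          rw [hmeasv v]
          exact negMulLog_sum_le _ _ (fun p _ => ENNReal.toReal_nonneg)
      _ = ∑ p ∈ A k ×ˢ A l, Real.negMulLog (ν (R p.1 p.2)).toReal :=
          Finset.sum_fiberwise_of_maps_to hmapsto _
      _ = ∑ a ∈ A k, ∑ b ∈ A l, Real.negMulLog (ν (R a b)).toReal :=
          Finset.sum_product (A k) (A l) (fun p => Real.negMulLog (ν (R p.1 p.2)).toReal)
      _ ≤ ∑ a ∈ A k, Real.negMulLog (∑ b ∈ A l, (ν (R a b)).toReal)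
            + ∑ b ∈ A l, Real.negMulLog (∑ a ∈ A k, (ν (R a b)).toReal) :=
          sum_sum_negMulLog_le (A k) (A l) (fun a b => (ν (R a b)).toReal)
            (fun a _ b _ => ENNReal.toReal_nonneg) htotal
      _ = E k + E l := by
          simp only [hEdef]
          congr 1
          · exact Finset.sum_congr rfl (fun a _ => by rw [hrow a])
          · exact Finset.sum_congr rfl (fun b _ => by rw [hcol b])
  -- Step 3
  have step3 : ∀ n', E (kk n') ≤ D n' + Real.log N := by
    intro n'
    simp only [hDdef, hEdef]
    apply cmp_lemma ν (J n') (A (kk n')) (Q n') (Patm (kk n'))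
      (fun j _ => hQm _ j) (fun a _ => hPatmm _ a) (hQd _) (hPd _) (hQfull _) (hPfull _) N hN1
    intro j hj
    by_cases hk0 : kk n' = 0
    · calc ((A (kk n')).filter fun a => ν (Q n' j ∩ Patm (kk n') a) ≠ 0).card
          ≤ (A (kk n')).card := Finset.card_filter_le _ _
        _ ≤ Fintype.card (Fin (kk n') → Γ) := by
            simp only [hAdef]
            exact le_trans Finset.card_image_le (le_of_eq Finset.card_univ)
        _ = Fintype.card Γ ^ (kk n') := by simp
        _ = 1 := by rw [hk0, pow_zero]
        _ ≤ N := hN1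
    · have hk1 : 1 ≤ kk n' := Nat.one_le_iff_ne_zero.2 hk0
      have hrkpos : (0:ℝ) < r ^ kk n' := by positivity
      apply card_sep_window _ (c * r ^ kk n') (mul_pos hc0 hrkpos) ?_
        ((j:ℝ) / 2 ^ n' - M * r ^ kk n') (((j:ℝ) + 1) / 2 ^ n' + M * r ^ kk n') ?_ N ?_
      · intro a ha b hb hab
        rw [Finset.mem_filter] at ha hb
        have ha2 := ha.1
        have hb2 := hb.1
        simp only [hAdef, Finset.mem_image, Finset.mem_univ, true_and] at ha2 hb2
        obtain ⟨ia, hia⟩ := ha2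
        obtain ⟨ib, hib⟩ := hb2
        rcases hsep (kk n') hk1 ia ib with he | hlt
        · exact absurd (by rw [← hia, ← hib, he]) hab
        · rw [← hia, ← hib]
          exact hlt
      · intro a ha
        rw [Finset.mem_filter] at ha
        obtain ⟨x, hxQ, hxP, hxG⟩ := hwitness _ _ (kk n') ha.2
        have hd := hgdist _ a x hxP hxG
        rw [abs_le] at hd
        simp only [hQdef, dyadicI, Set.mem_preimage, Set.mem_Ico] at hxQ
        constructor
        · linarith [hxQ.1, hd.2]
        · linarith [hxQ.2, hd.1]
      · have hmin : ((2:ℝ) ^ n')⁻¹ < r ^ (kk n' - 1) := by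
          have hlt : kk n' - 1 < kk n' := by omega
          have := hkkmin n' _ hlt
          linarith [not_le.1 this]
        have hpow : r ^ kk n' = r ^ (kk n' - 1) * r := by
          rw [← pow_succ]
          congr 1
          omega
        have key : ((j:ℝ) + 1) / 2 ^ n' + M * r ^ kk n' - ((j:ℝ) / 2 ^ n' - M * r ^ kk n')
            = ((2:ℝ) ^ n')⁻¹ + 2 * M * r ^ kk n' := by
          field_simp
          ring
        rw [key]
        have h1 : ((2:ℝ) ^ n')⁻¹ / r ^ (kk n') ≤ 1 / r := by
          rw [div_le_div_iff₀ hrkpos hr0]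
          calc ((2:ℝ) ^ n')⁻¹ * r ≤ r ^ (kk n' - 1) * r :=
                mul_le_mul_of_nonneg_right hmin.le hr0.le
            _ = 1 * r ^ kk n' := by rw [← hpow, one_mul]
        have h2 : (((2:ℝ) ^ n')⁻¹ + 2 * M * r ^ kk n') / (c * r ^ kk n')
            = (((2:ℝ) ^ n')⁻¹ / r ^ kk n' + 2 * M) / c := by
          field_simp
        rw [h2]
        have h3 : (((2:ℝ) ^ n')⁻¹ / r ^ kk n' + 2 * M) / c ≤ (1 / r + 2 * M) / c := by
          gcongr
        linarith [hNb]
  rw [hscale n, hscale m, hscale (n + m)]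
  have hfinal : D (n + m) ≤ D n + D m + 3 * Real.log N := by
    have h3n := step3 n
    have h3m := step3 m
    linarith
  rw [Real.logb]
  have heq : D n / Real.log 2 + D m / Real.log 2 + 3 * (Real.log N / Real.log 2)
      = (D n + D m + 3 * Real.log N) / Real.log 2 := by ring
  rw [heq]
  gcongr

end
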